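/- arXiv:2002.04905 — 7 statements merged into one kernel-verified Lean document; each statement's English description precedes it below -/
import Mathlib

section
/- Let X, Y, Z be Banach spaces, T ∈ B(X,Y), S ∈ B(Y,Z), with T, S, and S∘T regular. If T and S are generalized Weyl operators (i.e., ker T ≅ Y/R(T) and ker S ≅ Z/R(S) as Banach spaces via bounded isomorphisms of complements), then S∘T is a generalized Weyl operator. -/
section

variable {X Y : Type*} [NormedAddCommGroup X] [NormedSpace ℝ X]
  [NormedAddCommGroup Y] [NormedSpace ℝ Y]

/-- An operator is *regular* if it admits a bounded generalized inverse. -/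
def IsRegularOp (T : X →L[ℝ] Y) : Prop :=
  ∃ U : Y →L[ℝ] X, ∀ x, T (U (T x)) = T x

/-- A regular operator is a *generalized Weyl operator* if some closed complement of its range
is isomorphic, via a bounded linear isomorphism, to its kernel. -/
def IsGeneralizedWeyl (T : X →L[ℝ] Y) : Prop :=
  IsRegularOp T ∧
    ∃ N : Submodule ℝ Y, IsClosed (N : Set Y) ∧ IsCompl (LinearMap.range (T : X →ₗ[ℝ] Y)) N ∧
      Nonempty (↥(LinearMap.ker (T : X →ₗ[ℝ] Y)) ≃L[ℝ] ↥N)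

end

/-!
Let `W` be a reflexive generalized inverse of `S ∘ T`. Then `W ∘ S` is an outer inverse of `T`
and `T ∘ W` one of `S`. Two splittings do all the work: for regular `A` with generalized inverse
`U`, `ker (D ∘ A) ≅ ker A × (R(A) ∩ ker D)` via `x ↦ (x - U A x, A x)`; and for an outer inverse
`B` of `A` and a closed complement `N` of `R(A)`, `N × (R(A) ∩ ker B) ≅ ker (A ∘ B)` by the open
mapping theorem, since `A ∘ B` projects `R(A)` onto `R(A ∘ B)` along `R(A) ∩ ker B`. Hence
  `ker (S T) ≅ ker T × M ≅ N_T × M ≅ ker (T W S) ≅ ker S × G ≅ N_S × G ≅ ker (S T W)`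
with `M = R(T) ∩ ker (W S)` and `G = R(S) ∩ ker (T W)`, and `ker (S T W)` is a closed complement
of `R(S T)` because `S T W` is a projection onto `R(S T)`.
-/

open ContinuousLinearMap

namespace ContinuousLinearMap

section Regular

variable {R E F : Type*} [Ring R] [TopologicalSpace E] [AddCommGroup E] [Module R E]
  [TopologicalSpace F] [AddCommGroup F] [Module R F] {T : E →L[R] F} {U : F →L[R] E}

theorem isIdempotentElem_comp_of_regular (hU : ∀ x, T (U (T x)) = T x) :
    IsIdempotentElem (T ∘L U) :=
  ext fun y => hU (U y)

theorem range_comp_eq_of_regular (hU : ∀ x, T (U (T x)) = T x) : (T ∘L U).range = T.range :=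
  (LinearMap.range_comp_le_range _ _).antisymm fun _ ⟨x, hx⟩ => ⟨T x, hx ▸ hU x⟩

theorem ker_comp_eq_of_regular (hU : ∀ x, T (U (T x)) = T x) : (U ∘L T).ker = T.ker :=
  (LinearMap.ker_le_ker_comp _ _).antisymm' fun x (hx : U (T x) = 0) =>
    show T x = 0 by rw [← hU x, hx, map_zero]

theorem isCompl_range_ker_comp_of_regular (hU : ∀ x, T (U (T x)) = T x) :
    IsCompl T.range (T ∘L U).ker :=
  range_comp_eq_of_regular hU ▸
    LinearMap.IsIdempotentElem.isCompl (isIdempotentElem_comp_of_regular hU).toLinearMap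

theorem isClosed_range_of_regular [IsTopologicalAddGroup F] [T1Space F]
    (hU : ∀ x, T (U (T x)) = T x) : IsClosed (T.range : Set F) :=
  range_comp_eq_of_regular hU ▸ (isIdempotentElem_comp_of_regular hU).isClosed_range

variable {G : Type*} [TopologicalSpace G] [AddCommGroup G] [Module R G]

noncomputable def kerCompEquivProdOfRegular [IsTopologicalAddGroup E]
    (hU : ∀ x, T (U (T x)) = T x) (D : F →L[R] G) :
    (D ∘L T).ker ≃L[R] T.ker × ↥(T.range ⊓ D.ker) :=
  have hTU : ∀ y ∈ T.range, T (U y) = y := fun _ ⟨x, hx⟩ => hx ▸ hU x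
  ContinuousLinearEquiv.equivOfInverse
    ((((ContinuousLinearMap.id R E - U ∘L T) ∘L (D ∘L T).ker.subtypeL).codRestrict T.ker
        fun x => show T (x - U (T x)) = 0 by rw [map_sub, hU, sub_self]).prod
      ((T ∘L (D ∘L T).ker.subtypeL).codRestrict (T.range ⊓ D.ker)
        fun x => ⟨⟨x, rfl⟩, x.2⟩))
    ((T.ker.subtypeL ∘L fst R _ _ + U ∘L (T.range ⊓ D.ker).subtypeL ∘L snd R _ _).codRestrict
        (D ∘L T).ker fun ⟨k, m⟩ =>
      show D (T (k + U m)) = 0 by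
        rw [map_add, show T k = 0 from k.2, hTU m m.2.1, zero_add]; exact m.2.2)
    (fun x => Subtype.ext (sub_add_cancel (x : E) (U (T x))))
    (fun ⟨k, m⟩ => by
      have hk : T k = 0 := k.2
      have hm : T (U m) = m := hTU m m.2.1
      refine Prod.ext (Subtype.ext ?_) (Subtype.ext ?_)
      · show k + U m - U (T (k + U m)) = k
        rw [map_add, hk, hm, zero_add, add_sub_cancel_right]
      · show T (k + U m) = m
        rw [map_add, hk, hm, zero_add])

end Regular

section Banach

variable {𝕜 E F : Type*} [NontriviallyNormedField 𝕜] [NormedAddCommGroup E] [NormedSpace 𝕜 E]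
  [NormedAddCommGroup F] [NormedSpace 𝕜 F] [CompleteSpace F]

noncomputable def prodEquivKerCompOfOuterInverse {A : E →L[𝕜] F} {B : F →L[𝕜] E}
    (hB : ∀ y, B (A (B y)) = B y) {N : Submodule 𝕜 F} (hAN : IsCompl A.range N)
    (hN : IsClosed (N : Set F)) (hG : IsClosed ((A.range ⊓ B.ker : Submodule 𝕜 F) : Set F)) :
    (N × ↥(A.range ⊓ B.ker)) ≃L[𝕜] (A ∘L B).ker :=
  have := hN.completeSpace_coe
  have := hG.completeSpace_coe
  ContinuousLinearEquiv.ofBijective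
    (((ContinuousLinearMap.id 𝕜 F - A ∘L B) ∘L
        (N.subtypeL.coprod (A.range ⊓ B.ker).subtypeL)).codRestrict (A ∘L B).ker
      fun x => by simp [hB])
    (LinearMap.ker_eq_bot'.mpr fun ⟨n, g⟩ h => by
      have h' : (n : F) + g = A (B (n + g)) := sub_eq_zero.mp (congrArg Subtype.val h)
      have hn : (n : F) = 0 := by
        refine Submodule.disjoint_def.mp hAN.disjoint n ?_ n.2
        rw [eq_sub_of_add_eq h']
        exact sub_mem ⟨_, rfl⟩ g.2.1
      have hg : (g : F) = 0 := by
        rw [hn, zero_add] at h'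
        rw [h', show B g = 0 from g.2.2, map_zero]
      exact Prod.ext (Subtype.ext hn) (Subtype.ext hg))
    (LinearMap.range_eq_top.mpr fun c => by
      obtain ⟨a, ha, n, hn, hc⟩ := Submodule.mem_sup.mp
        (hAN.codisjoint.eq_top ▸ Submodule.mem_top : (c : F) ∈ A.range ⊔ N)
      have hBa : B (a - A (B a)) = 0 := by rw [map_sub, hB, sub_self]
      refine ⟨(⟨n, hn⟩, ⟨a - A (B a), sub_mem ha ⟨_, rfl⟩, hBa⟩), Subtype.ext ?_⟩
      show n + (a - A (B a)) - A (B (n + (a - A (B a)))) = c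
      have hc' : n + (a - A (B a)) = c - A (B a) := by rw [← hc]; abel
      rw [hc', map_sub, map_sub, show A (B c) = 0 from c.2, hB]
      abel)

end Banach

end ContinuousLinearMap

theorem IsRegularOp.exists_reflexive {E F : Type*} [NormedAddCommGroup E] [NormedSpace ℝ E]
    [NormedAddCommGroup F] [NormedSpace ℝ F] {T : E →L[ℝ] F} (hT : IsRegularOp T) :
    ∃ W : F →L[ℝ] E, (∀ x, T (W (T x)) = T x) ∧ ∀ y, W (T (W y)) = W y := by
  obtain ⟨U, hU⟩ := hT
  exact ⟨U ∘L T ∘L U, fun x => by simp only [comp_apply, hU],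
    fun y => by simp only [comp_apply, hU]⟩

theorem generalizedWeyl_comp_general
    {X Y Z : Type*} [NormedAddCommGroup X] [NormedSpace ℝ X]
    [NormedAddCommGroup Y] [NormedSpace ℝ Y] [CompleteSpace Y]
    [NormedAddCommGroup Z] [NormedSpace ℝ Z] [CompleteSpace Z]
    (T : X →L[ℝ] Y) (S : Y →L[ℝ] Z)
    (hST : IsRegularOp (S.comp T))
    (hTW : IsGeneralizedWeyl T) (hSW : IsGeneralizedWeyl S) :
    IsGeneralizedWeyl (S.comp T) := by
  obtain ⟨⟨U, hU⟩, NT, hNT, hTNT, ⟨iT⟩⟩ := hTW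
  obtain ⟨⟨V, hV⟩, NS, hNS, hSNS, ⟨iS⟩⟩ := hSW
  obtain ⟨W, hW, hWW⟩ := hST.exists_reflexive
  have hWS_outer : ∀ y, (W ∘L S) (T ((W ∘L S) y)) = (W ∘L S) y := fun y => hWW (S y)
  have hTW_outer : ∀ z, (T ∘L W) (S ((T ∘L W) z)) = (T ∘L W) z := fun z => congrArg T (hWW z)
  have hM : IsClosed ((T.range ⊓ (W ∘L S).ker : Submodule ℝ Y) : Set Y) :=
    (isClosed_range_of_regular hU).inter (isClosed_ker _)
  have hG : IsClosed ((S.range ⊓ (T ∘L W).ker : Submodule ℝ Z) : Set Z) :=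
    (isClosed_range_of_regular hV).inter (isClosed_ker _)
  refine ⟨hST, ((S ∘L T) ∘L W).ker, isClosed_ker _, isCompl_range_ker_comp_of_regular hW, ⟨?_⟩⟩
  -- the composites below agree up to reassociation of `∘L`, which holds definitionally
  exact (ContinuousLinearEquiv.ofEq _ _ (ker_comp_eq_of_regular hW).symm).trans <|
    (kerCompEquivProdOfRegular hU (W ∘L S)).trans <|
    (iT.prodCongr (.refl ℝ _)).trans <|
    (prodEquivKerCompOfOuterInverse hWS_outer hTNT hNT hM).trans <|
    (kerCompEquivProdOfRegular hV (T ∘L W)).trans <|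
    (iS.prodCongr (.refl ℝ _)).trans <|
    prodEquivKerCompOfOuterInverse hTW_outer hSNS hNS hG

/-- If `T, S, S∘T` are regular and `T` and `S` are generalized Weyl operators,
then `S∘T` is a generalized Weyl operator. -/
theorem generalizedWeyl_comp
    {X Y Z : Type*} [NormedAddCommGroup X] [NormedSpace ℝ X] [CompleteSpace X]
    [NormedAddCommGroup Y] [NormedSpace ℝ Y] [CompleteSpace Y]
    [NormedAddCommGroup Z] [NormedSpace ℝ Z] [CompleteSpace Z]
    (T : X →L[ℝ] Y) (S : Y →L[ℝ] Z)
    (hT : IsRegularOp T) (hS : IsRegularOp S) (hST : IsRegularOp (S.comp T))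
    (hTW : IsGeneralizedWeyl T) (hSW : IsGeneralizedWeyl S) :
    IsGeneralizedWeyl (S.comp T) :=
  generalizedWeyl_comp_general T S hST hTW hSW
end

section
/- Let H be a Hilbert space and S ∈ B(H) with non-closed range. Then there exists a sequence of operators (Bₙ) in B(H) with ‖Bₙ‖ = 1 for all n such that ‖S Bₙ‖ → 0. Consequently, the left-multiplication operator F : B(H) → B(H), F(T) = S T, does not have closed range. -/
open Filter

/-- If `S ∈ B(H)` has non-closed range, then there is a sequence of
norm-one operators `Bₙ` with `‖S Bₙ‖ → 0`; consequently the left-multiplication operator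
`T ↦ S T` on `B(H)` does not have closed range. -/
theorem leftMul_not_closed_range_of_not_closed_range
    {H : Type*} [NormedAddCommGroup H] [InnerProductSpace ℂ H] [CompleteSpace H]
    (S : H →L[ℂ] H) (hS : ¬ IsClosed (Set.range S)) :
    (∃ B : ℕ → H →L[ℂ] H, (∀ n, ‖B n‖ = 1) ∧
      Tendsto (fun n => ‖S * B n‖) atTop (nhds 0)) ∧
    ¬ IsClosed (Set.range fun T : H →L[ℂ] H => S * T) := by
  -- `H` is nontrivial, otherwise the range of `S` is finite hence closed.
  have hnt : Nontrivial H := by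
    by_contra h
    rw [not_nontrivial_iff_subsingleton] at h
    exact hS (Set.toFinite _).isClosed
  -- a unit vector `e`
  obtain ⟨e, he⟩ := exists_norm_eq H (zero_le_one)
  -- Unit vectors almost killed by `S`.
  have key : ∀ ε : ℝ, 0 < ε → ∃ x : H, ‖x‖ = 1 ∧ ‖S x‖ < ε := by
    intro ε hε
    by_contra h
    push_neg at h
    have hb : ∀ x : H, ‖x‖ ≤ (⟨ε, hε.le⟩ : NNReal)⁻¹ * ‖S x‖ := by
      intro x
      rcases eq_or_ne x 0 with rfl | hx
      · simp
      · have hnx : 0 < ‖x‖ := norm_pos_iff.mpr hx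
        have h1 : ‖(‖x‖⁻¹ • x : H)‖ = 1 := by
          rw [norm_smul, norm_inv, norm_norm, inv_mul_cancel₀ hnx.ne']
        have := h _ h1
        rw [S.map_smul_of_tower, norm_smul, norm_inv, norm_norm] at this
        have hε' : ε * ‖x‖ ≤ ‖S x‖ := by
          have h2 := mul_le_mul_of_nonneg_left this hnx.le
          rw [← mul_assoc, mul_inv_cancel₀ hnx.ne', one_mul] at h2
          linarith [h2]
        show ‖x‖ ≤ (ε : ℝ)⁻¹ * ‖S x‖
        rw [le_inv_mul_iff₀ hε]
        exact hε'
    have := (AddMonoidHomClass.antilipschitz_of_bound S hb).isClosed_range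
      S.uniformContinuous
    exact hS this
  -- choose the unit vectors
  have hx : ∀ n : ℕ, ∃ x : H, ‖x‖ = 1 ∧ ‖S x‖ < 1 / (n + 1) := fun n =>
    key _ (by positivity)
  choose x hx1 hx2 using hx
  -- the rank-one operators
  set B : ℕ → H →L[ℂ] H := fun n => (innerSL ℂ e).smulRight (x n) with hB
  have hSB : ∀ n, S * B n = (innerSL ℂ e).smulRight (S (x n)) := by
    intro n
    ext v
    simp [hB, ContinuousLinearMap.smulRight_apply]
  have hBnorm : ∀ n, ‖B n‖ = 1 := by
    intro n
    rw [hB, ContinuousLinearMap.norm_smulRight_apply, innerSL_apply_norm, he, hx1,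
      one_mul]
  have hSBnorm : ∀ n, ‖S * B n‖ = ‖S (x n)‖ := by
    intro n
    rw [hSB, ContinuousLinearMap.norm_smulRight_apply, innerSL_apply_norm, he, one_mul]
  have htend : Tendsto (fun n => ‖S * B n‖) atTop (nhds 0) := by
    apply squeeze_zero (g := fun n : ℕ => 1 / (n + 1)) (fun n => norm_nonneg _)
      (fun n => by rw [hSBnorm n]; exact (hx2 n).le)
    exact tendsto_one_div_add_atTop_nhds_zero_nat
  refine ⟨⟨B, hBnorm, htend⟩, ?_⟩
  -- Second part
  intro hcl
  -- pick `y` in the closure of the range but not in the range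
  have : ∃ y, y ∈ closure (Set.range S) ∧ y ∉ Set.range S := by
    by_contra h
    push_neg at h
    exact hS (isClosed_of_closure_subset h)
  obtain ⟨y, hy1, hy2⟩ := this
  -- the continuous map `G : y ↦ ⟪e, ·⟫ • y`
  set G : H →L[ℂ] (H →L[ℂ] H) := ContinuousLinearMap.smulRightL ℂ H H (innerSL ℂ e)
    with hG
  have hmaps : Set.MapsTo G (Set.range S)
      (Set.range fun T : H →L[ℂ] H => S * T) := by
    rintro _ ⟨u, rfl⟩
    refine ⟨G u, ?_⟩
    ext v
    simp [hG, ContinuousLinearMap.smulRightL, ContinuousLinearMap.smulRight_apply]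
  have hmem : G y ∈ closure (Set.range fun T : H →L[ℂ] H => S * T) :=
    map_mem_closure G.continuous hy1 hmaps
  rw [hcl.closure_eq] at hmem
  obtain ⟨T, hT⟩ := hmem
  -- evaluate at `e`
  have : S (T e) = y := by
    have := congrArg (fun A : H →L[ℂ] H => A e) hT
    simp only [ContinuousLinearMap.mul_apply] at this
    rw [this]
    simp [hG, ContinuousLinearMap.smulRightL, ContinuousLinearMap.smulRight_apply,
      inner_self_eq_norm_sq_to_K, he]
  exact hy2 ⟨T e, this⟩
end

section
/- Let H be a Hilbert space and let M, N be closed subspaces of H with M + N not closed. Let p, q be the orthogonal projections onto M and N. Then the right-ideal sum pB(H) + qB(H) is not a closed subspace of B(H). -/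
/-!
Pick a functional `f` and a vector `e` with `f e = 1` (Hahn–Banach). Then the rank-one operator
`y ↦ f y • x` lies in `P B(E) + Q B(E)` exactly when `x ∈ range P + range Q`: one direction
factors `P a` as `P ∘ (y ↦ f y • a)`, the other evaluates `P T + Q T'` at `e`. So
`range P + range Q` is the preimage of the ideal sum under the continuous map `x ↦ f(·) • x`,
and is closed whenever the ideal sum is.
-/

open ContinuousLinearMap

section

variable {𝕜 E : Type*} [NontriviallyNormedField 𝕜] [NormedAddCommGroup E] [NormedSpace 𝕜 E]

def rightIdealSum (P Q : E →L[𝕜] E) : Set (E →L[𝕜] E) :=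
  {R | ∃ T T' : E →L[𝕜] E, R = P ∘L T + Q ∘L T'}

theorem smulRight_mem_rightIdealSum_iff {P Q : E →L[𝕜] E} {f : StrongDual 𝕜 E} {e : E}
    (he : f e = 1) (x : E) :
    f.smulRight x ∈ rightIdealSum P Q ↔ x ∈ P.range ⊔ Q.range := by
  constructor
  · rintro ⟨T, T', hTT'⟩
    have hx : x = P (T e) + Q (T' e) := by
      simpa [he] using congrArg (fun R : E →L[𝕜] E => R e) hTT'
    exact hx ▸ Submodule.add_mem_sup ⟨T e, rfl⟩ ⟨T' e, rfl⟩
  · intro hx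
    obtain ⟨_, ⟨a, rfl⟩, _, ⟨b, rfl⟩, rfl⟩ := Submodule.mem_sup.mp hx
    refine ⟨f.smulRight a, f.smulRight b, ?_⟩
    ext y
    simp

theorem isClosed_range_sup_of_isClosed_rightIdealSum [SeparatingDual 𝕜 E] {P Q : E →L[𝕜] E}
    (hS : IsClosed (rightIdealSum P Q)) :
    IsClosed ((P.range ⊔ Q.range : Submodule 𝕜 E) : Set E) := by
  rcases subsingleton_or_nontrivial E with _ | _
  · exact Set.Subsingleton.isClosed Set.subsingleton_of_subsingleton
  obtain ⟨e, he₀⟩ := exists_ne (0 : E)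
  obtain ⟨f, he⟩ := SeparatingDual.exists_eq_one (R := 𝕜) he₀
  have hpre : ((P.range ⊔ Q.range : Submodule 𝕜 E) : Set E) =
      smulRightL 𝕜 E E f ⁻¹' rightIdealSum P Q :=
    Set.ext fun x => (smulRight_mem_rightIdealSum_iff he x).symm
  exact hpre ▸ hS.preimage (smulRightL 𝕜 E E f).continuous

end

theorem right_ideal_sum_not_closed_general
    {H : Type*} [NormedAddCommGroup H] [InnerProductSpace ℂ H]
    (M N : Submodule ℂ H) [CompleteSpace M] [CompleteSpace N]
    (hMN : ¬ IsClosed ((M ⊔ N : Submodule ℂ H) : Set H)) :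
    ¬ IsClosed {R : H →L[ℂ] H | ∃ T T' : H →L[ℂ] H,
        R = (M.subtypeL.comp (M.orthogonalProjectionOnto)).comp T +
            (N.subtypeL.comp (N.orthogonalProjectionOnto)).comp T'} := by
  intro hS
  apply hMN
  simpa only [Submodule.range_starProjection] using
    isClosed_range_sup_of_isClosed_rightIdealSum (P := M.starProjection) (Q := N.starProjection) hS

/-- If `M, N` are closed subspaces of a Hilbert space `H` with `M + N` not
closed, and `p, q` are the orthogonal projections onto `M` and `N`, then the right-ideal sum
`pB(H) + qB(H)` is not a closed subspace of `B(H)`. -/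
theorem right_ideal_sum_not_closed
    {H : Type*} [NormedAddCommGroup H] [InnerProductSpace ℂ H] [CompleteSpace H]
    (M N : Submodule ℂ H) [CompleteSpace M] [CompleteSpace N]
    (hMN : ¬ IsClosed ((M ⊔ N : Submodule ℂ H) : Set H)) :
    ¬ IsClosed {R : H →L[ℂ] H | ∃ T T' : H →L[ℂ] H,
        R = (M.subtypeL.comp (M.orthogonalProjectionOnto)).comp T +
            (N.subtypeL.comp (N.orthogonalProjectionOnto)).comp T'} :=
  right_ideal_sum_not_closed_general M N hMN
end

section
/- Let X, Y, Z be Banach spaces and F ∈ B(X,Y), G ∈ B(Y,Z) regular operators (admitting generalized inverses) such that GF is also regular. Then the sequence 0 → ker F → ker GF → ker G → X_F → X_{GF} → X_G → 0 is exact, where X_F, X_{GF}, X_G denote (chosen closed) complements of Im F in Y, Im GF in Z, and Im G in Z respectively, with the natural connecting maps. -/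
/-!
A projection onto a complement of `range f` kills exactly `range f`, so two vectors have the same
projection iff they differ by an element of `range f`. Since `g` maps `range f` onto
`range (g ∘ f)` and `range (g ∘ f) ≤ range g`, the projections onto complements of `range f`,
`range (g ∘ f)` and `range g` are compatible with `g` and with each other, and each exactness
claim reduces to correcting a vector by an element of one of these ranges.
-/

namespace Submodule

variable {R E : Type*} [Ring R] [AddCommGroup E] [Module R E]

theorem projectionOnto_eq_projectionOnto_iff_sub_mem {p q : Submodule R E} (h : IsCompl p q)
    {x y : E} : projectionOnto p q h x = projectionOnto p q h y ↔ x - y ∈ q := by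
  rw [← sub_eq_zero, ← map_sub, projectionOnto_apply_eq_zero_iff]

theorem projectionOnto_projectionOnto_of_le {p q p' q' : Submodule R E} (h : IsCompl p q)
    (h' : IsCompl p' q') (hq : q ≤ q') (x : E) :
    projectionOnto p' q' h' (projectionOnto p q h x) = projectionOnto p' q' h' x :=
  (projectionOnto_eq_projectionOnto_iff_sub_mem h').2 <|
    hq <| by simpa [sub_mem_comm_iff] using sub_projection_mem h x

end Submodule

open Submodule LinearMap

section SixTerm

variable {R M N P : Type*} [Ring R] [AddCommGroup M] [Module R M] [AddCommGroup N] [Module R N]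
  [AddCommGroup P] [Module R P] {f : M →ₗ[R] N} {g : N →ₗ[R] P}
  {Nf : Submodule R N} (hNf : IsCompl Nf (range f))
  {Pgf : Submodule R P} (hPgf : IsCompl Pgf (range (g ∘ₗ f)))
  {Pg : Submodule R P} (hPg : IsCompl Pg (range g))

include hNf hPgf in
theorem projectionOnto_map_projectionOnto (y : N) :
    projectionOnto Pgf _ hPgf (g (projectionOnto Nf _ hNf y)) = projectionOnto Pgf _ hPgf (g y) := by
  obtain ⟨x, hx⟩ : y - projectionOnto Nf _ hNf y ∈ range f := by
    simpa using sub_projection_mem hNf y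
  rw [projectionOnto_eq_projectionOnto_iff_sub_mem, ← map_sub]
  exact ⟨-x, by simp [hx]⟩

include hNf in
theorem projectionOnto_eq_zero_iff_of_mem_ker {y : N} (hy : y ∈ ker g) :
    projectionOnto Nf _ hNf y = 0 ↔ ∃ x ∈ ker (g ∘ₗ f), f x = y := by
  rw [projectionOnto_apply_eq_zero_iff]
  refine ⟨fun ⟨x, hx⟩ ↦ ⟨x, ?_, hx⟩, fun ⟨x, _, hx⟩ ↦ ⟨x, hx⟩⟩
  simpa [hx] using hy

include hNf hPgf in
theorem projectionOnto_map_eq_zero_iff (y : Nf) :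
    projectionOnto Pgf _ hPgf (g y) = 0 ↔ ∃ v ∈ ker g, projectionOnto Nf _ hNf v = y := by
  constructor
  · rw [projectionOnto_apply_eq_zero_iff]
    rintro ⟨x, hx⟩
    refine ⟨y - f x, by simpa [sub_eq_zero] using hx.symm, ?_⟩
    rw [map_sub, projectionOnto_apply_left, projectionOnto_apply_of_mem_right hNf ⟨x, rfl⟩,
      sub_zero]
  · rintro ⟨v, hv, rfl⟩
    rw [projectionOnto_map_projectionOnto hNf hPgf, mem_ker.1 hv, map_zero]

include hNf hPgf hPg in
theorem projectionOnto_eq_zero_iff_mem_range_map (z : Pgf) :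
    projectionOnto Pg _ hPg (z : P) = 0 ↔ ∃ y : Nf, projectionOnto Pgf _ hPgf (g y) = z := by
  have hle : range (g ∘ₗ f) ≤ range g := range_comp_le_range f g
  rw [projectionOnto_apply_eq_zero_iff]
  constructor
  · rintro ⟨u, hu⟩
    refine ⟨projectionOnto Nf _ hNf u, ?_⟩
    rw [projectionOnto_map_projectionOnto hNf hPgf, hu, projectionOnto_apply_left]
  · rintro ⟨y, hy⟩
    have hsub : g y - z ∈ range (g ∘ₗ f) := by
      rw [← projectionOnto_eq_projectionOnto_iff_sub_mem hPgf, hy, projectionOnto_apply_left]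
    simpa using sub_mem (mem_range_self g y) (hle hsub)

include hPgf hPg in
theorem exists_projectionOnto_eq_of_range_comp (w : Pg) :
    ∃ z : Pgf, projectionOnto Pg _ hPg (z : P) = w :=
  ⟨projectionOnto Pgf _ hPgf w, by
    rw [projectionOnto_projectionOnto_of_le hPgf hPg (range_comp_le_range f g),
      projectionOnto_apply_left]⟩

end SixTerm

set_option linter.deprecated false in
theorem regular_six_term_exact_sequence_general
    {X Y Z : Type*} [NormedAddCommGroup X] [NormedSpace ℝ X]
    [NormedAddCommGroup Y] [NormedSpace ℝ Y]
    [NormedAddCommGroup Z] [NormedSpace ℝ Z]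
    (F : X →L[ℝ] Y) (G : Y →L[ℝ] Z)
    (YF : Submodule ℝ Y)
    (hYF : IsCompl YF (LinearMap.range (F : X →ₗ[ℝ] Y)))
    (ZGF : Submodule ℝ Z)
    (hZGF : IsCompl ZGF (LinearMap.range ((G.comp F : X →L[ℝ] Z) : X →ₗ[ℝ] Z)))
    (ZG : Submodule ℝ Z)
    (hZG : IsCompl ZG (LinearMap.range (G : Y →ₗ[ℝ] Z))) :
    -- exactness at `ker GF`: the image of `ker F` is the kernel of `F` restricted to `ker GF`
    (∀ x ∈ LinearMap.ker ((G.comp F : X →L[ℝ] Z) : X →ₗ[ℝ] Z), (F x = 0 ↔ x ∈ LinearMap.ker (F : X →ₗ[ℝ] Y))) ∧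
    -- exactness at `ker G`: the image of `F|_{ker GF}` is the kernel of the projection onto
    -- `YF` along `range F`, restricted to `ker G`
    (∀ y ∈ LinearMap.ker (G : Y →ₗ[ℝ] Z),
      (Submodule.linearProjOfIsCompl YF (LinearMap.range (F : X →ₗ[ℝ] Y)) hYF y = 0 ↔
        ∃ x ∈ LinearMap.ker ((G.comp F : X →L[ℝ] Z) : X →ₗ[ℝ] Z), F x = y)) ∧
    -- exactness at `YF`: the kernel of the map induced by `G` is the image of `ker G`
    (∀ y : YF,
      (Submodule.linearProjOfIsCompl ZGF (LinearMap.range ((G.comp F : X →L[ℝ] Z) : X →ₗ[ℝ] Z)) hZGF (G y) = 0 ↔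
        ∃ v ∈ LinearMap.ker (G : Y →ₗ[ℝ] Z),
          Submodule.linearProjOfIsCompl YF (LinearMap.range (F : X →ₗ[ℝ] Y)) hYF v = y)) ∧
    -- exactness at `ZGF`: the kernel of the projection to `ZG` is the image of `YF`
    (∀ z : ZGF,
      (Submodule.linearProjOfIsCompl ZG (LinearMap.range (G : Y →ₗ[ℝ] Z)) hZG (z : Z) = 0 ↔
        ∃ y : YF,
          Submodule.linearProjOfIsCompl ZGF (LinearMap.range ((G.comp F : X →L[ℝ] Z) : X →ₗ[ℝ] Z)) hZGF (G y) = z)) ∧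
    -- exactness at `ZG`: the projection `ZGF → ZG` is surjective
    (∀ w : ZG, ∃ z : ZGF,
      Submodule.linearProjOfIsCompl ZG (LinearMap.range (G : Y →ₗ[ℝ] Z)) hZG (z : Z) = w) :=
  ⟨fun _ _ ↦ mem_ker.symm,
    fun _ hy ↦ projectionOnto_eq_zero_iff_of_mem_ker (g := (G : Y →ₗ[ℝ] Z)) hYF hy,
    projectionOnto_map_eq_zero_iff (g := (G : Y →ₗ[ℝ] Z)) hYF hZGF,
    projectionOnto_eq_zero_iff_mem_range_map hYF hZGF hZG,
    exists_projectionOnto_eq_of_range_comp hZGF hZG⟩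

/-- If `F ∈ B(X,Y)`, `G ∈ B(Y,Z)` and `GF` are regular, then the sequence
`0 → ker F → ker GF → ker G → X_F → X_{GF} → X_G → 0` is exact, where `X_F`, `X_{GF}`, `X_G`
are chosen closed complements of the ranges of `F`, `GF`, `G` and the maps are the natural
inclusion, restriction of `F`, projections along the ranges, and the map induced by `G`. -/
theorem regular_six_term_exact_sequence
    {X Y Z : Type*} [NormedAddCommGroup X] [NormedSpace ℝ X] [CompleteSpace X]
    [NormedAddCommGroup Y] [NormedSpace ℝ Y] [CompleteSpace Y]
    [NormedAddCommGroup Z] [NormedSpace ℝ Z] [CompleteSpace Z]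
    (F : X →L[ℝ] Y) (G : Y →L[ℝ] Z)
    (hF : ∃ U : Y →L[ℝ] X, ∀ x, F (U (F x)) = F x)
    (hG : ∃ V : Z →L[ℝ] Y, ∀ y, G (V (G y)) = G y)
    (hGF : ∃ W : Z →L[ℝ] X, ∀ x, G (F (W (G (F x)))) = G (F x))
    (YF : Submodule ℝ Y) (hYFc : IsClosed (YF : Set Y))
    (hYF : IsCompl YF (LinearMap.range (F : X →ₗ[ℝ] Y)))
    (ZGF : Submodule ℝ Z) (hZGFc : IsClosed (ZGF : Set Z))
    (hZGF : IsCompl ZGF (LinearMap.range ((G.comp F : X →L[ℝ] Z) : X →ₗ[ℝ] Z)))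
    (ZG : Submodule ℝ Z) (hZGc : IsClosed (ZG : Set Z))
    (hZG : IsCompl ZG (LinearMap.range (G : Y →ₗ[ℝ] Z))) :
    -- exactness at `ker GF`: the image of `ker F` is the kernel of `F` restricted to `ker GF`
    (∀ x ∈ LinearMap.ker ((G.comp F : X →L[ℝ] Z) : X →ₗ[ℝ] Z), (F x = 0 ↔ x ∈ LinearMap.ker (F : X →ₗ[ℝ] Y))) ∧
    -- exactness at `ker G`: the image of `F|_{ker GF}` is the kernel of the projection onto
    -- `YF` along `range F`, restricted to `ker G`
    (∀ y ∈ LinearMap.ker (G : Y →ₗ[ℝ] Z),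
      (Submodule.linearProjOfIsCompl YF (LinearMap.range (F : X →ₗ[ℝ] Y)) hYF y = 0 ↔
        ∃ x ∈ LinearMap.ker ((G.comp F : X →L[ℝ] Z) : X →ₗ[ℝ] Z), F x = y)) ∧
    -- exactness at `YF`: the kernel of the map induced by `G` is the image of `ker G`
    (∀ y : YF,
      (Submodule.linearProjOfIsCompl ZGF (LinearMap.range ((G.comp F : X →L[ℝ] Z) : X →ₗ[ℝ] Z)) hZGF (G y) = 0 ↔
        ∃ v ∈ LinearMap.ker (G : Y →ₗ[ℝ] Z),
          Submodule.linearProjOfIsCompl YF (LinearMap.range (F : X →ₗ[ℝ] Y)) hYF v = y)) ∧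
    -- exactness at `ZGF`: the kernel of the projection to `ZG` is the image of `YF`
    (∀ z : ZGF,
      (Submodule.linearProjOfIsCompl ZG (LinearMap.range (G : Y →ₗ[ℝ] Z)) hZG (z : Z) = 0 ↔
        ∃ y : YF,
          Submodule.linearProjOfIsCompl ZGF (LinearMap.range ((G.comp F : X →L[ℝ] Z) : X →ₗ[ℝ] Z)) hZGF (G y) = z)) ∧
    -- exactness at `ZG`: the projection `ZGF → ZG` is surjective
    (∀ w : ZG, ∃ z : ZGF,
      Submodule.linearProjOfIsCompl ZG (LinearMap.range (G : Y →ₗ[ℝ] Z)) hZG (z : Z) = w) :=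
  regular_six_term_exact_sequence_general F G YF hYF ZGF hZGF ZG hZG
end

section
/- Let H, K be Hilbert spaces, T ∈ B(H,K) a generalized Weyl operator (closed range with dim ker T = dim ker T*), and F ∈ B(H,K) a finite rank operator such that Im(T+F) is closed. Then T + F is a generalized Weyl operator. -/
/-!
Write `S = T + F` and `N = ker F`, a closed subspace of finite codimension. Since `S` and `T`
agree on `N`, we have `ker S ⊓ N = ker T ⊓ N`, and passing to adjoints (`(range X)ᗮ = ker X†`,
where `F†` again has finite rank) gives the same relation between `(range S)ᗮ` and `(range T)ᗮ`.

If `ker T` is finite-dimensional, then so are the other three spaces. The index of a linear map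
does not change under a finite-rank perturbation, so `dim ker S - dim (range S)ᗮ` equals
`dim ker T - dim (range T)ᗮ = 0`. Otherwise all four spaces are infinite-dimensional. An
infinite-dimensional Hilbert space is isometric to each of its closed subspaces of finite
codimension, because both have Hilbert bases of the same cardinality. This gives
`ker S ≅ ker S ⊓ N = ker T ⊓ N ≅ ker T ≅ (range T)ᗮ`, and likewise `(range T)ᗮ ≅ (range S)ᗮ`.
-/

open LinearMap Submodule Module
open scoped InnerProductSpace InnerProduct

namespace LinearMap

theorem ker_add_inf_ker {R M N : Type*} [Semiring R] [AddCommMonoid M] [Module R M]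
    [AddCommMonoid N] [Module R N] (f g : M →ₗ[R] N) :
    ker (f + g) ⊓ ker g = ker f ⊓ ker g := by
  ext x
  simp +contextual [and_congr_left_iff]

variable {k M N : Type*} [DivisionRing k] [AddCommGroup M] [Module k M] [AddCommGroup N]
  [Module k N]

theorem finiteDimensional_of_finiteDimensional_inf_ker {P : Submodule k M} (g : M →ₗ[k] N)
    [FiniteDimensional k (range g)] (h : FiniteDimensional k ↥(P ⊓ ker g)) :
    FiniteDimensional k P :=
  (fg_iff_finiteDimensional P).mp <| fg_of_fg_map_of_fg_inf_ker g
    ((fg_iff_finiteDimensional _).mpr (Submodule.finiteDimensional_of_le map_le_range))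
    ((fg_iff_finiteDimensional _).mpr h)

theorem finiteDimensional_ker_add_iff {f g : M →ₗ[k] N} [FiniteDimensional k (range g)] :
    FiniteDimensional k (ker (f + g)) ↔ FiniteDimensional k (ker f) := by
  constructor <;> intro h <;> refine finiteDimensional_of_finiteDimensional_inf_ker g ?_
  · rw [← ker_add_inf_ker]
    exact Submodule.finiteDimensional_of_le inf_le_left
  · rw [ker_add_inf_ker]
    exact Submodule.finiteDimensional_of_le inf_le_left

theorem index_add_of_finiteDimensional_range {f g : M →ₗ[k] N} [FiniteDimensional k (range g)]
    [FiniteDimensional k (ker f)] [FiniteDimensional k (N ⧸ range f)]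
    [FiniteDimensional k (ker (f + g))] [FiniteDimensional k (N ⧸ range (f + g))] :
    (f + g).index = f.index := by
  set ι := (ker g).subtype
  have hcomp : (f + g) ∘ₗ ι = f ∘ₗ ι := by
    ext x
    simp [ι, mem_ker.mp x.2]
  have : FiniteDimensional k (ker ι) := by
    rw [ker_subtype]
    infer_instance
  have : FiniteDimensional k (M ⧸ range ι) := by
    rw [range_subtype]
    exact g.quotKerEquivRange.symm.finiteDimensional
  have h₁ := index_comp (f := ι) (f + g)
  have h₂ := index_comp (f := ι) f
  rw [hcomp] at h₁
  lia

end LinearMap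

section InnerProductSpace

variable {𝕜 E G : Type*} [RCLike 𝕜] [NormedAddCommGroup E] [InnerProductSpace 𝕜 E]
  [NormedAddCommGroup G] [InnerProductSpace 𝕜 G]

theorem Orthonormal.sumElim {ι κ : Type*} {v : ι → E} {w : κ → E} (hv : Orthonormal 𝕜 v)
    (hw : Orthonormal 𝕜 w) (hvw : ∀ i j, ⟪v i, w j⟫_𝕜 = 0) : Orthonormal 𝕜 (Sum.elim v w) := by
  classical
  rw [orthonormal_iff_ite] at *
  rintro (i | j) (i' | j') <;> simp [hv, hw, hvw, inner_eq_zero_symm]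

namespace HilbertBasis

variable {ι ι' κ : Type*}

theorem eq_zero_of_forall_inner_eq_zero (b : HilbertBasis ι 𝕜 E) {x : E}
    (h : ∀ i, ⟪b i, x⟫_𝕜 = 0) : x = 0 :=
  b.repr.map_eq_zero_iff.mp <| lp.ext <| funext fun i => (b.repr_apply_apply x i).trans (h i)

variable [CompleteSpace E]

protected noncomputable def reindex (b : HilbertBasis ι 𝕜 E) (e : ι ≃ ι') :
    HilbertBasis ι' 𝕜 E :=
  HilbertBasis.mk (b.orthonormal.comp _ e.symm.injective) <| by
    rw [Set.range_comp, e.symm.surjective.range_eq, Set.image_univ, b.dense_span]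

noncomputable def sumOrthogonal {V : Submodule 𝕜 E} [V.HasOrthogonalProjection]
    (b : HilbertBasis ι 𝕜 V) (c : HilbertBasis κ 𝕜 Vᗮ) : HilbertBasis (ι ⊕ κ) 𝕜 E :=
  HilbertBasis.mkOfOrthogonalEqBot (v := Sum.elim (fun i => (b i : E)) (fun j => (c j : E)))
    ((b.orthonormal.comp_linearIsometry V.subtypeₗᵢ).sumElim
      (c.orthonormal.comp_linearIsometry Vᗮ.subtypeₗᵢ)
      fun i j => inner_right_of_mem_orthogonal (b i).2 (c j).2) <| by
    refine (Submodule.eq_bot_iff _).mpr fun x hx => ?_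
    have hv : ∀ a, ⟪Sum.elim (fun i => (b i : E)) (fun j => (c j : E)) a, x⟫_𝕜 = 0 :=
      fun a => inner_right_of_mem_orthogonal (subset_span (Set.mem_range_self a)) hx
    have hV : V.orthogonalProjectionOnto x = 0 :=
      b.eq_zero_of_forall_inner_eq_zero fun i => by simpa using hv (.inl i)
    have hVperp : Vᗮ.orthogonalProjectionOnto x = 0 :=
      c.eq_zero_of_forall_inner_eq_zero fun j => by simpa using hv (.inr j)
    rw [← V.starProjection_add_starProjection_orthogonal x, starProjection_apply,
      starProjection_apply, hV, hVperp]
    simp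

end HilbertBasis

theorem Submodule.nonempty_linearIsometryEquiv_of_finiteDimensional_orthogonal [CompleteSpace E]
    (V : Submodule 𝕜 E) [CompleteSpace V] [FiniteDimensional 𝕜 Vᗮ]
    (hV : ¬FiniteDimensional 𝕜 V) : Nonempty (V ≃ₗᵢ[𝕜] E) := by
  obtain ⟨w, b, -⟩ := exists_hilbertBasis 𝕜 V
  have : Infinite w := by
    by_contra! hw
    have := Fintype.ofFinite w
    exact hV (Module.Finite.of_basis b.toOrthonormalBasis.toBasis)
  let c := (stdOrthonormalBasis 𝕜 Vᗮ).toHilbertBasis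
  obtain ⟨e⟩ : Nonempty (w ⊕ Fin (finrank 𝕜 Vᗮ) ≃ w) := Cardinal.eq.mp <| by
    rw [Cardinal.mk_sum, Cardinal.mk_fin, Cardinal.lift_natCast, Cardinal.lift_uzero,
      Cardinal.add_nat_eq _ (Cardinal.aleph0_le_mk w)]
  exact ⟨b.repr.trans ((b.sumOrthogonal c).reindex e).repr.symm⟩

theorem Submodule.nonempty_inf_ker_linearIsometryEquiv {G' : Type*} [NormedAddCommGroup G']
    [NormedSpace 𝕜 G'] (P : Submodule 𝕜 E) [CompleteSpace P] (g : E →L[𝕜] G')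
    [FiniteDimensional 𝕜 g.range] (hP : ¬FiniteDimensional 𝕜 P) :
    Nonempty (↥(P ⊓ g.ker) ≃ₗᵢ[𝕜] P) := by
  let V : Submodule 𝕜 P := (g ∘L P.subtypeL).ker
  have : CompleteSpace V := (g ∘L P.subtypeL).isClosed_ker.completeSpace_coe
  have : FiniteDimensional 𝕜 (g ∘L P.subtypeL).range :=
    Submodule.finiteDimensional_of_le (range_comp_le_range _ _)
  have : FiniteDimensional 𝕜 (P ⧸ V) := (quotKerEquivRange _).symm.finiteDimensional
  have : FiniteDimensional 𝕜 Vᗮ := V.quotientEquivOrthogonal.toLinearEquiv.finiteDimensional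
  have hV : ¬FiniteDimensional 𝕜 V := fun _ => hP (Module.Finite.of_submodule_quotient V)
  obtain ⟨e⟩ := V.nonempty_linearIsometryEquiv_of_finiteDimensional_orthogonal hV
  have hVeq : V = (P ⊓ g.ker).comap P.subtype := by
    rw [comap_inf, comap_subtype_self, top_inf_eq]
    rfl
  let i : ↥(P ⊓ g.ker) ≃ₗᵢ[𝕜] (P ⊓ g.ker).comap P.subtype :=
    { (comapSubtypeEquivOfLe inf_le_left).symm with norm_map' := fun _ => rfl }
  exact ⟨i.trans ((LinearIsometryEquiv.ofEq _ _ hVeq.symm).trans e)⟩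

namespace ContinuousLinearMap

theorem nonempty_ker_add_linearIsometryEquiv [CompleteSpace E] (T F : E →L[𝕜] G)
    [FiniteDimensional 𝕜 F.range] (hT : ¬FiniteDimensional 𝕜 T.ker) :
    Nonempty ((T + F).ker ≃ₗᵢ[𝕜] T.ker) := by
  have : CompleteSpace T.ker := T.isClosed_ker.completeSpace_coe
  have : CompleteSpace (T + F).ker := (T + F).isClosed_ker.completeSpace_coe
  have hTF : ¬FiniteDimensional 𝕜 (T + F).ker :=
    (finiteDimensional_ker_add_iff (f := (T : E →ₗ[𝕜] G))).not.mpr hT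
  obtain ⟨e₁⟩ := (T + F).ker.nonempty_inf_ker_linearIsometryEquiv F hTF
  obtain ⟨e₂⟩ := T.ker.nonempty_inf_ker_linearIsometryEquiv F hT
  have hker : (T + F).ker ⊓ F.ker = T.ker ⊓ F.ker := ker_add_inf_ker (T : E →ₗ[𝕜] G) F
  exact ⟨e₁.symm.trans ((LinearIsometryEquiv.ofEq _ _ hker).trans e₂)⟩

variable [CompleteSpace G]

theorem index_eq_finrank_ker_sub_finrank_orthogonal_range (T : E →L[𝕜] G)
    (hT : IsClosed (T.range : Set G)) :
    (T : E →ₗ[𝕜] G).index = finrank 𝕜 T.ker - finrank 𝕜 T.rangeᗮ := by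
  have : CompleteSpace T.range := hT.completeSpace_coe
  rw [index_eq_finrank_sub, T.range.quotientEquivOrthogonal.toLinearEquiv.finrank_eq]

variable [CompleteSpace E]

theorem finiteDimensional_range_adjoint (F : E →L[𝕜] G) [FiniteDimensional 𝕜 F.range] :
    FiniteDimensional 𝕜 (F†).range := by
  have hF : F = F.range.subtypeL ∘L F.rangeRestrict := rfl
  rw [hF, adjoint_comp]
  exact Submodule.finiteDimensional_of_le (range_comp_le_range _ _)

theorem finiteDimensional_orthogonal_range_add_iff (T F : E →L[𝕜] G)
    [FiniteDimensional 𝕜 F.range] :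
    FiniteDimensional 𝕜 (T + F).rangeᗮ ↔ FiniteDimensional 𝕜 T.rangeᗮ := by
  have := F.finiteDimensional_range_adjoint
  rw [orthogonal_range, orthogonal_range, map_add]
  exact finiteDimensional_ker_add_iff (f := (T† : G →ₗ[𝕜] E))

theorem finrank_ker_add_eq_finrank_orthogonal_range_add (T F : E →L[𝕜] G)
    (hT : IsClosed (T.range : Set G)) (hTF : IsClosed ((T + F).range : Set G))
    [FiniteDimensional 𝕜 F.range] [FiniteDimensional 𝕜 T.ker] [FiniteDimensional 𝕜 T.rangeᗮ]
    (h : finrank 𝕜 T.ker = finrank 𝕜 T.rangeᗮ) :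
    finrank 𝕜 (T + F).ker = finrank 𝕜 (T + F).rangeᗮ := by
  have : CompleteSpace T.range := hT.completeSpace_coe
  have : CompleteSpace (T + F).range := hTF.completeSpace_coe
  have : FiniteDimensional 𝕜 (T + F).ker :=
    (finiteDimensional_ker_add_iff (f := (T : E →ₗ[𝕜] G))).mpr ‹_›
  have : FiniteDimensional 𝕜 (T + F).rangeᗮ :=
    (T.finiteDimensional_orthogonal_range_add_iff F).mpr ‹_›
  have : FiniteDimensional 𝕜 (G ⧸ T.range) :=
    T.range.quotientEquivOrthogonal.symm.toLinearEquiv.finiteDimensional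
  have : FiniteDimensional 𝕜 (G ⧸ (T + F).range) :=
    (T + F).range.quotientEquivOrthogonal.symm.toLinearEquiv.finiteDimensional
  have hindex := index_add_of_finiteDimensional_range (f := (T : E →ₗ[𝕜] G)) (g := F)
  rw [← toLinearMap_add, index_eq_finrank_ker_sub_finrank_orthogonal_range _ hTF,
    index_eq_finrank_ker_sub_finrank_orthogonal_range _ hT] at hindex
  lia

end ContinuousLinearMap

end InnerProductSpace

/-- Let `T ∈ B(H,K)` be a generalized Weyl operator between Hilbert spaces
(closed range and `ker T` isometrically isomorphic to `(range T)ᗮ = ker T*`), and let `F` be a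
finite-rank operator such that `Im (T + F)` is closed. Then `T + F` is a generalized Weyl
operator. -/
theorem generalizedWeyl_add_finiteRank
    {H K : Type*} [NormedAddCommGroup H] [InnerProductSpace ℂ H] [CompleteSpace H]
    [NormedAddCommGroup K] [InnerProductSpace ℂ K] [CompleteSpace K]
    (T : H →L[ℂ] K)
    (hTcl : IsClosed (Set.range T))
    (hTW : Nonempty (↥(LinearMap.ker (T : H →ₗ[ℂ] K)) ≃ₗᵢ[ℂ] ↥((LinearMap.range (T : H →ₗ[ℂ] K))ᗮ)))
    (F : H →L[ℂ] K) (hF : FiniteDimensional ℂ ↥(LinearMap.range (F : H →ₗ[ℂ] K)))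
    (hTF : IsClosed (Set.range (T + F))) :
    IsClosed (Set.range (T + F)) ∧
      Nonempty (↥(LinearMap.ker ((T + F : H →L[ℂ] K) : H →ₗ[ℂ] K)) ≃ₗᵢ[ℂ] ↥((LinearMap.range ((T + F : H →L[ℂ] K) : H →ₗ[ℂ] K))ᗮ)) := by
  refine ⟨hTF, ?_⟩
  obtain ⟨W⟩ := hTW
  by_cases hfin : FiniteDimensional ℂ T.ker
  · have : FiniteDimensional ℂ T.rangeᗮ := W.toLinearEquiv.finiteDimensional
    have : FiniteDimensional ℂ (T + F).ker :=
      (finiteDimensional_ker_add_iff (f := (T : H →ₗ[ℂ] K))).mpr hfin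
    have : FiniteDimensional ℂ (T + F).rangeᗮ :=
      (T.finiteDimensional_orthogonal_range_add_iff F).mpr ‹_›
    have h := T.finrank_ker_add_eq_finrank_orthogonal_range_add F hTcl hTF
      W.toLinearEquiv.finrank_eq
    exact ⟨((stdOrthonormalBasis ℂ _).reindex (finCongr h)).repr.trans
      (stdOrthonormalBasis ℂ _).repr.symm⟩
  · have hfin' : ¬FiniteDimensional ℂ (T†).ker := by
      rw [← T.orthogonal_range]
      exact fun _ => hfin W.symm.toLinearEquiv.finiteDimensional
    have := F.finiteDimensional_range_adjoint
    obtain ⟨e₁⟩ := T.nonempty_ker_add_linearIsometryEquiv F hfin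
    obtain ⟨e₂⟩ := (T†).nonempty_ker_add_linearIsometryEquiv (F†) hfin'
    refine ⟨e₁.trans (W.trans ?_)⟩
    rw [T.orthogonal_range, (T + F).orthogonal_range, map_add]
    exact e₂.symm
end

section
/- Let H, K, M be Hilbert spaces, T ∈ B(H,K) and S ∈ B(K,M) generalized Weyl operators (closed range, dim ker = dim coker as cardinals), and suppose R(ST) is closed. Then ST is a generalized Weyl operator. -/
/-!
Hilbert spaces are classified up to isometric isomorphism by their Hilbert dimension, and this
dimension is invariant under bounded isomorphisms: for Hilbert bases `b` of `E`, `c` of `F` and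
`f : E → F` onto, every `c j` pairs nontrivially with some `f (b i)`, while each `f (b i)` pairs
nontrivially with only countably many `c j`.

So it suffices to compare dimensions. Write `N = ker S` and `R = R(T)`. Restricting `T` to
`ker ST = T⁻¹ N` gives `dim ker ST = dim ker T + dim (R ∩ N)`. Since `S⁻¹ R(ST) = R + N`, the map
`S` followed by the projection onto `R(ST)ᗮ` gives `dim R(ST)ᗮ = dim R(S)ᗮ + dim (R + N)ᗮ`.
Projecting `N` onto `Rᗮ` gives `dim N + dim (R + N)ᗮ = dim (R ∩ N) + dim Rᗮ`. Using
`dim ker T = dim Rᗮ` and `dim N = dim R(S)ᗮ`, both `dim ker ST` and `dim R(ST)ᗮ` equal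
`dim Rᗮ + dim (R ∩ N)`, and no infinite cardinal has to be cancelled.
-/

open Cardinal Function Submodule
open scoped InnerProductSpace

universe u v w₁ w₂

section HilbertDim

variable {𝕜 : Type*} [RCLike 𝕜]
  {E : Type u} [NormedAddCommGroup E] [InnerProductSpace 𝕜 E]
  {F : Type v} [NormedAddCommGroup F] [InnerProductSpace 𝕜 F]

variable (𝕜 E) in
/-- Independent of the chosen maximal orthonormal set only when `E` is complete. -/
noncomputable def hilbertDim : Cardinal.{u} :=
  #(exists_maximal_orthonormal (orthonormal_empty 𝕜 E)).choose

theorem exists_hilbertBasis_mk_eq_hilbertDim [CompleteSpace E] :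
    ∃ (ι : Type u) (_ : HilbertBasis ι 𝕜 E), #ι = hilbertDim 𝕜 E := by
  obtain ⟨-, hv, hmax⟩ := (exists_maximal_orthonormal (orthonormal_empty 𝕜 E)).choose_spec
  refine ⟨_, HilbertBasis.mkOfOrthogonalEqBot hv ?_, rfl⟩
  rw [Subtype.range_coe]
  exact (maximal_orthonormal_iff_orthogonalComplement_eq_bot hv).1 hmax

theorem HilbertBasis.eq_zero_of_forall_inner_eq_zero_s16 {ι : Type*} (b : HilbertBasis ι 𝕜 E)
    {x : E} (hx : ∀ i, ⟪b i, x⟫_𝕜 = 0) : x = 0 := by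
  have : b.repr x = 0 := by
    ext i
    simp [b.repr_apply_apply, hx]
  simpa using this

theorem HilbertBasis.lift_mk_le_of_surjective [CompleteSpace E] [CompleteSpace F]
    {ι : Type w₁} {ι' : Type w₂} (b : HilbertBasis ι 𝕜 E) (c : HilbertBasis ι' 𝕜 F)
    (f : E →L[𝕜] F) (hf : Surjective f) : lift.{w₁} #ι' ≤ lift.{w₂} #ι := by
  rcases finite_or_infinite ι with hι | hι
  · have := Fintype.ofFinite ι
    have : FiniteDimensional 𝕜 E := Module.Finite.of_basis b.toOrthonormalBasis.toBasis
    have : FiniteDimensional 𝕜 F := Module.Finite.of_surjective (f : E →ₗ[𝕜] F) hf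
    have := c.orthonormal.linearIndependent.finite
    have := Fintype.ofFinite ι'
    have hle : Fintype.card ι' ≤ Fintype.card ι := by
      rw [← Module.finrank_eq_card_basis b.toOrthonormalBasis.toBasis,
        ← Module.finrank_eq_card_basis c.toOrthonormalBasis.toBasis]
      exact LinearMap.finrank_le_finrank_of_surjective hf
    simpa using hle
  · have hcover : ∀ j, ∃ i, ⟪c j, f (b i)⟫_𝕜 ≠ 0 := by
      intro j
      by_contra! h
      have hadj : f.adjoint (c j) = 0 := b.eq_zero_of_forall_inner_eq_zero_s16 fun i => by
        rw [ContinuousLinearMap.adjoint_inner_right, ← inner_conj_symm, h i, map_zero]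
      have hmem : c j ∈ (LinearMap.range (f : E →ₗ[𝕜] F))ᗮ := by
        rw [f.orthogonal_range]
        exact hadj
      rw [LinearMap.range_eq_top.2 hf, top_orthogonal_eq_bot, mem_bot] at hmem
      exact c.orthonormal.ne_zero j hmem
    choose g hg using hcover
    have hfiber : ∀ i, #(g ⁻¹' {i}) ≤ ℵ₀ := fun i => by
      refine ((c.orthonormal.inner_products_summable (f (b i))).countable_support.mono ?_).le_aleph0
      rintro j rfl
      simpa using hg j
    calc lift.{w₁} #ι' ≤ lift.{w₂} #ι * ℵ₀ :=
          lift_mk_le_lift_mk_mul_of_lift_mk_preimage_le g fun i => by simpa using hfiber i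
      _ = lift.{w₂} #ι := mul_aleph0_eq (by simp)

theorem HilbertBasis.lift_mk_eq_lift_hilbertDim [CompleteSpace E] {ι : Type w₁}
    (b : HilbertBasis ι 𝕜 E) : lift.{u} #ι = lift.{w₁} (hilbertDim 𝕜 E) := by
  obtain ⟨κ, c, hc⟩ := exists_hilbertBasis_mk_eq_hilbertDim (𝕜 := 𝕜) (E := E)
  rw [← hc]
  exact le_antisymm (c.lift_mk_le_of_surjective b (.id 𝕜 E) surjective_id)
    (b.lift_mk_le_of_surjective c (.id 𝕜 E) surjective_id)

theorem ContinuousLinearEquiv.lift_hilbertDim_eq [CompleteSpace E] [CompleteSpace F]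
    (e : E ≃L[𝕜] F) : lift.{v} (hilbertDim 𝕜 E) = lift.{u} (hilbertDim 𝕜 F) := by
  obtain ⟨ι, b, hb⟩ := exists_hilbertBasis_mk_eq_hilbertDim (𝕜 := 𝕜) (E := E)
  obtain ⟨ι', c, hc⟩ := exists_hilbertBasis_mk_eq_hilbertDim (𝕜 := 𝕜) (E := F)
  rw [← hb, ← hc]
  exact le_antisymm (c.lift_mk_le_of_surjective b e.symm.toContinuousLinearMap e.symm.surjective)
    (b.lift_mk_le_of_surjective c e.toContinuousLinearMap e.surjective)

theorem nonempty_linearIsometryEquiv_iff_lift_hilbertDim_eq [CompleteSpace E] [CompleteSpace F] :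
    Nonempty (E ≃ₗᵢ[𝕜] F) ↔ lift.{v} (hilbertDim 𝕜 E) = lift.{u} (hilbertDim 𝕜 F) := by
  refine ⟨fun ⟨e⟩ => e.toContinuousLinearEquiv.lift_hilbertDim_eq, fun h => ?_⟩
  obtain ⟨ι, b, hb⟩ := exists_hilbertBasis_mk_eq_hilbertDim (𝕜 := 𝕜) (E := E)
  obtain ⟨ι', c, hc⟩ := exists_hilbertBasis_mk_eq_hilbertDim (𝕜 := 𝕜) (E := F)
  rw [← hb, ← hc] at h
  obtain ⟨e⟩ := lift_mk_eq'.1 h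
  let c' : HilbertBasis ι 𝕜 F := HilbertBasis.mk (c.orthonormal.comp e e.injective)
    (by rw [EquivLike.range_comp]; exact c.dense_span.ge)
  exact ⟨b.repr.trans c'.repr.symm⟩

end HilbertDim

section Decomposition

variable {𝕜 : Type*} [RCLike 𝕜] {X : Type u} [NormedAddCommGroup X] [InnerProductSpace 𝕜 X]

theorem Submodule.map_starProjection_orthogonal {U W : Submodule 𝕜 X} [U.HasOrthogonalProjection]
    (hUW : U ≤ W) : W.map (Uᗮ.starProjection : X →ₗ[𝕜] X) = W ⊓ Uᗮ := by
  refine le_antisymm ?_ fun y hy => ⟨y, hy.1, starProjection_eq_self_iff.2 hy.2⟩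
  rintro _ ⟨x, hx, rfl⟩
  refine ⟨?_, Uᗮ.starProjection_apply_mem x⟩
  rw [ContinuousLinearMap.coe_coe, U.starProjection_orthogonal]
  exact W.sub_mem hx (hUW (U.starProjection_apply_mem x))

variable [CompleteSpace X]

theorem hilbertDim_eq_add_inf_orthogonal {U V : Submodule 𝕜 X} (hU : IsClosed (U : Set X))
    (hV : IsClosed (V : Set X)) (hUV : U ≤ V) :
    hilbertDim 𝕜 V = hilbertDim 𝕜 U + hilbertDim 𝕜 ↥(V ⊓ Uᗮ) := by
  have := hU.completeSpace_coe
  have := hV.completeSpace_coe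
  have := (hV.inter U.isClosed_orthogonal).completeSpace_coe
  obtain ⟨ι, bU, hbU⟩ := exists_hilbertBasis_mk_eq_hilbertDim (𝕜 := 𝕜) (E := U)
  obtain ⟨κ, bW, hbW⟩ := exists_hilbertBasis_mk_eq_hilbertDim (𝕜 := 𝕜) (E := ↥(V ⊓ Uᗮ))
  let v : ι ⊕ κ → V := Sum.elim (inclusion hUV ∘ bU) (inclusion inf_le_left ∘ bW)
  have hv : Orthonormal 𝕜 v := by
    classical
    rw [orthonormal_iff_ite]
    rintro (i | i) (j | j)
    · simpa [v] using orthonormal_iff_ite.1 bU.orthonormal i j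
    · simpa [v] using inner_right_of_mem_orthogonal (bU i).2 (bW j).2.2
    · simpa [v] using inner_left_of_mem_orthogonal (bU j).2 (bW i).2.2
    · simpa [v] using orthonormal_iff_ite.1 bW.orthonormal i j
  have hsp : (span 𝕜 (Set.range v))ᗮ = ⊥ := by
    refine (Submodule.eq_bot_iff _).2 fun x hx => ?_
    have hxv : ∀ k, ⟪v k, x⟫_𝕜 = 0 := fun k => hx _ (subset_span (Set.mem_range_self k))
    have hxU : (x : X) ∈ Uᗮ := by
      rw [← orthogonalProjectionOnto_eq_zero_iff]
      refine bU.eq_zero_of_forall_inner_eq_zero_s16 fun i => ?_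
      rw [inner_orthogonalProjectionOnto_eq_of_mem_left]
      simpa [v] using hxv (.inl i)
    have : (⟨x, x.2, hxU⟩ : ↥(V ⊓ Uᗮ)) = 0 :=
      bW.eq_zero_of_forall_inner_eq_zero_s16 fun k => by simpa [v] using hxv (.inr k)
    ext
    simpa using congrArg Subtype.val this
  have := (HilbertBasis.mkOfOrthogonalEqBot hv hsp).lift_mk_eq_lift_hilbertDim
  rw [← hbU, ← hbW]
  simpa [mk_sum] using this.symm

end Decomposition

section ClosedRange

variable {𝕜 : Type*} [RCLike 𝕜]
  {E : Type u} [NormedAddCommGroup E] [InnerProductSpace 𝕜 E] [CompleteSpace E]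
  {F : Type v} [NormedAddCommGroup F] [InnerProductSpace 𝕜 F] [CompleteSpace F]

theorem lift_hilbertDim_inf_orthogonal_inf_ker (g : E →L[𝕜] F) {V : Submodule 𝕜 E}
    (hV : IsClosed (V : Set E)) (hgV : IsClosed (V.map (g : E →ₗ[𝕜] F) : Set F)) :
    lift.{v} (hilbertDim 𝕜 ↥(V ⊓ (V ⊓ LinearMap.ker (g : E →ₗ[𝕜] F))ᗮ)) =
      lift.{u} (hilbertDim 𝕜 ↥(V.map (g : E →ₗ[𝕜] F))) := by
  set V₀ := V ⊓ (V ⊓ LinearMap.ker (g : E →ₗ[𝕜] F))ᗮ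
  have := (hV.inter g.isClosed_ker).completeSpace_coe
  have := (hV.inter (V ⊓ LinearMap.ker (g : E →ₗ[𝕜] F)).isClosed_orthogonal).completeSpace_coe
  have := hgV.completeSpace_coe
  let φ : V₀ →L[𝕜] V.map (g : E →ₗ[𝕜] F) :=
    (g ∘L V₀.subtypeL).codRestrict _ fun x => mem_map_of_mem x.2.1
  refine (ContinuousLinearEquiv.ofBijective φ ?_ ?_).lift_hilbertDim_eq
  · refine (LinearMap.ker_eq_bot').2 fun x hx => Subtype.ext ?_
    have hxker : (x : E) ∈ V ⊓ LinearMap.ker (g : E →ₗ[𝕜] F) :=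
      ⟨x.2.1, congrArg Subtype.val hx⟩
    simpa using (orthogonal_disjoint _).le_bot ⟨hxker, x.2.2⟩
  · rw [LinearMap.range_eq_top]
    rintro ⟨_, x, hx, rfl⟩
    obtain ⟨p, hp, q, hq, rfl⟩ :=
      (V ⊓ LinearMap.ker (g : E →ₗ[𝕜] F)).exists_add_mem_mem_orthogonal x
    refine ⟨⟨q, by simpa using V.sub_mem hx hp.1, hq⟩, Subtype.ext ?_⟩
    change g q = g (p + q)
    rw [map_add, show g p = 0 from hp.2, zero_add]

theorem lift_hilbertDim_eq_inf_ker_add_map (g : E →L[𝕜] F) {V : Submodule 𝕜 E}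
    (hV : IsClosed (V : Set E)) (hgV : IsClosed (V.map (g : E →ₗ[𝕜] F) : Set F)) :
    lift.{v} (hilbertDim 𝕜 V) = lift.{v} (hilbertDim 𝕜 ↥(V ⊓ LinearMap.ker (g : E →ₗ[𝕜] F))) +
      lift.{u} (hilbertDim 𝕜 ↥(V.map (g : E →ₗ[𝕜] F))) := by
  rw [hilbertDim_eq_add_inf_orthogonal (hV.inter g.isClosed_ker) hV inf_le_left, lift_add,
    lift_hilbertDim_inf_orthogonal_inf_ker g hV hgV]

theorem lift_hilbertDim_comap (f : E →L[𝕜] F)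
    (hf : IsClosed (LinearMap.range (f : E →ₗ[𝕜] F) : Set F)) {B : Submodule 𝕜 F}
    (hB : IsClosed (B : Set F)) :
    lift.{v} (hilbertDim 𝕜 (B.comap (f : E →ₗ[𝕜] F))) =
      lift.{v} (hilbertDim 𝕜 (LinearMap.ker (f : E →ₗ[𝕜] F))) +
        lift.{u} (hilbertDim 𝕜 ↥(LinearMap.range (f : E →ₗ[𝕜] F) ⊓ B)) := by
  have h := lift_hilbertDim_eq_inf_ker_add_map f (V := B.comap (f : E →ₗ[𝕜] F))
    (hB.preimage f.continuous) (by rw [map_comap_eq]; exact hf.inter hB)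
  rwa [inf_eq_right.2 (LinearMap.ker_le_comap _), map_comap_eq] at h

theorem lift_hilbertDim_orthogonal_of_le_range (g : E →L[𝕜] F)
    (hg : IsClosed (LinearMap.range (g : E →ₗ[𝕜] F) : Set F)) {C : Submodule 𝕜 F}
    (hC : IsClosed (C : Set F)) (hCg : C ≤ LinearMap.range (g : E →ₗ[𝕜] F)) :
    lift.{u} (hilbertDim 𝕜 Cᗮ) = lift.{u} (hilbertDim 𝕜 (LinearMap.range (g : E →ₗ[𝕜] F))ᗮ) +
      lift.{v} (hilbertDim 𝕜 (C.comap (g : E →ₗ[𝕜] F))ᗮ) := by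
  have := hC.completeSpace_coe
  have := hg.completeSpace_coe
  have hker : LinearMap.ker ((Cᗮ.starProjection ∘L g : E →L[𝕜] F) : E →ₗ[𝕜] F) =
      C.comap (g : E →ₗ[𝕜] F) := by
    rw [ContinuousLinearMap.toLinearMap_comp, LinearMap.ker_comp, ker_starProjection,
      orthogonal_orthogonal]
  have hrange : (⊤ : Submodule 𝕜 E).map ((Cᗮ.starProjection ∘L g : E →L[𝕜] F) : E →ₗ[𝕜] F) =
      LinearMap.range (g : E →ₗ[𝕜] F) ⊓ Cᗮ := by
    rw [Submodule.map_top, ContinuousLinearMap.toLinearMap_comp, LinearMap.range_comp,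
      map_starProjection_orthogonal hCg]
  have hiso := lift_hilbertDim_inf_orthogonal_inf_ker (Cᗮ.starProjection ∘L g) (V := ⊤) (by simp)
    (by rw [hrange]; exact hg.inter (isClosed_orthogonal C))
  rw [hker, hrange, top_inf_eq, top_inf_eq] at hiso
  rw [hilbertDim_eq_add_inf_orthogonal (isClosed_orthogonal _) (isClosed_orthogonal C)
    (orthogonal_le hCg), orthogonal_orthogonal, inf_comm, lift_add, hiso]

end ClosedRange

section Grassmann

variable {𝕜 : Type*} [RCLike 𝕜] {X : Type u} [NormedAddCommGroup X] [InnerProductSpace 𝕜 X]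
  [CompleteSpace X]

theorem hilbertDim_add_hilbertDim_orthogonal_sup {U V : Submodule 𝕜 X}
    (hU : IsClosed (U : Set X)) (hV : IsClosed (V : Set X))
    (hUV : IsClosed ((U ⊔ V : Submodule 𝕜 X) : Set X)) :
    hilbertDim 𝕜 V + hilbertDim 𝕜 ↥(U ⊔ V)ᗮ = hilbertDim 𝕜 ↥(U ⊓ V) + hilbertDim 𝕜 Uᗮ := by
  have := hU.completeSpace_coe
  have := hUV.completeSpace_coe
  have hUmap : U.map (Uᗮ.starProjection : X →ₗ[𝕜] X) = ⊥ :=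
    LinearMap.le_ker_iff_map.1 (by rw [ker_starProjection, orthogonal_orthogonal])
  have hmap : V.map (Uᗮ.starProjection : X →ₗ[𝕜] X) = (U ⊔ V) ⊓ Uᗮ := by
    rw [← map_starProjection_orthogonal le_sup_left, Submodule.map_sup, hUmap, bot_sup_eq]
  have hdimV := lift_hilbertDim_eq_inf_ker_add_map Uᗮ.starProjection hV
    (by rw [hmap]; exact hUV.inter (isClosed_orthogonal U))
  rw [ker_starProjection, orthogonal_orthogonal, hmap, inf_comm V] at hdimV
  have hdimU := hilbertDim_eq_add_inf_orthogonal (isClosed_orthogonal _) (isClosed_orthogonal U)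
    (orthogonal_le (le_sup_left : U ≤ U ⊔ V))
  rw [orthogonal_orthogonal, inf_comm] at hdimU
  simp only [lift_id] at hdimV
  rw [hdimV, hdimU, add_assoc, add_comm (hilbertDim 𝕜 ↥(U ⊔ V)ᗮ)]

end Grassmann

/-- Let `T ∈ B(H,K)` and `S ∈ B(K,M)` be generalized Weyl operators between
Hilbert spaces (closed range, kernel isometrically isomorphic to the orthogonal complement of
the range, i.e. equal Hilbert dimensions of kernel and cokernel), and suppose `R(ST)` is
closed. Then `ST` is a generalized Weyl operator. -/
theorem generalizedWeyl_comp_hilbert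
    {H K M : Type*} [NormedAddCommGroup H] [InnerProductSpace ℂ H] [CompleteSpace H]
    [NormedAddCommGroup K] [InnerProductSpace ℂ K] [CompleteSpace K]
    [NormedAddCommGroup M] [InnerProductSpace ℂ M] [CompleteSpace M]
    (T : H →L[ℂ] K) (S : K →L[ℂ] M)
    (hTcl : IsClosed (Set.range T))
    (hTW : Nonempty (↥(LinearMap.ker (T : H →ₗ[ℂ] K)) ≃ₗᵢ[ℂ] ↥((LinearMap.range (T : H →ₗ[ℂ] K))ᗮ)))
    (hScl : IsClosed (Set.range S))
    (hSW : Nonempty (↥(LinearMap.ker (S : K →ₗ[ℂ] M)) ≃ₗᵢ[ℂ] ↥((LinearMap.range (S : K →ₗ[ℂ] M))ᗮ)))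
    (hSTcl : IsClosed (Set.range (S.comp T))) :
    Nonempty (↥(LinearMap.ker (S.comp T : H →ₗ[ℂ] M)) ≃ₗᵢ[ℂ] ↥((LinearMap.range (S.comp T : H →ₗ[ℂ] M))ᗮ)) := by
  set N := LinearMap.ker (S : K →ₗ[ℂ] M)
  set R := LinearMap.range (T : H →ₗ[ℂ] K)
  have hNcl : IsClosed (N : Set K) := S.isClosed_ker
  have hRcl : IsClosed (R : Set K) := by rwa [LinearMap.coe_range, ContinuousLinearMap.coe_coe]
  have hRScl : IsClosed (LinearMap.range (S : K →ₗ[ℂ] M) : Set M) := by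
    rwa [LinearMap.coe_range, ContinuousLinearMap.coe_coe]
  have hRSTcl : IsClosed (R.map (S : K →ₗ[ℂ] M) : Set M) := by
    rwa [← LinearMap.range_comp, LinearMap.coe_range]
  have := (S.comp T).isClosed_ker.completeSpace_coe
  rw [nonempty_linearIsometryEquiv_iff_lift_hilbertDim_eq] at hTW hSW ⊢
  rw [ContinuousLinearMap.toLinearMap_comp, LinearMap.ker_comp, LinearMap.range_comp]
  have hker := lift_hilbertDim_comap T hRcl hNcl
  have hcoker := lift_hilbertDim_orthogonal_of_le_range S hRScl hRSTcl LinearMap.map_le_range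
  rw [comap_map_eq] at hcoker
  have hgrass := hilbertDim_add_hilbertDim_orthogonal_sup hRcl hNcl
    (by rw [← comap_map_eq]; exact hRSTcl.preimage S.continuous)
  rw [hTW, ← lift_add] at hker
  rw [← hSW, ← lift_add, hgrass, add_comm] at hcoker
  apply lift_injective.{u_2}
  calc lift.{u_2} (lift.{u_3} (hilbertDim ℂ ↥(N.comap (T : H →ₗ[ℂ] K))))
      = lift.{u_3} (lift.{u_2} (hilbertDim ℂ ↥(N.comap (T : H →ₗ[ℂ] K)))) := by simp
    _ = lift.{u_1} (lift.{u_2} (hilbertDim ℂ ↥(R.map (S : K →ₗ[ℂ] M))ᗮ)) := by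
      rw [hker, hcoker]; simp only [lift_lift, lift_add]; rfl
    _ = lift.{u_2} (lift.{u_1} (hilbertDim ℂ ↥(R.map (S : K →ₗ[ℂ] M))ᗮ)) := by simp
end

section
/- Let ι : ℕ → ℕ be an injective monotone map with infinite complement, and define F on the standard Hilbert module H_A (over a unital C*-algebra A) by F(e_k) = e_{ι(k)} on the standard basis, extended A-linearly and continuously. Then F is an adjointable isometry whose range is the closed submodule generated by {e_{ι(k)}}, this range is orthogonally complementable with non-finitely-generated complement, and F is upper semi-A-Fredholm but not A-Fredholm. -/
/-!
`F` is extension by zero along `ι`, and restriction `y ↦ y ∘ ι` is its adjoint. `F` is an isometry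
onto the sequences vanishing off `ι(ℕ)`; the sequences vanishing on `ι(ℕ)` form a complement.
That complement is not finitely generated: finitely many `gᵢ ∈ ℓ²(A)` have entries tending to `0`,
so along some injective sequence `sⱼ ∉ ι(ℕ)` they are all `O(q^(2j))`, where `q = ‖c‖ ∈ (0, 1)`
for a scalar `c`. Any right `A`-combination of the `gᵢ` is then `O(q^(2j))` along `s` too, which
the sequence equal to `cʲ • 1` at `sⱼ` and `0` elsewhere is not.
-/

open Filter Function Topology
open scoped ENNReal

set_option autoImplicit false

namespace Function

variable {α β γ δ : Type*} [Zero γ]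

theorem apply_extend_zero [Zero δ] (F : γ → δ) (hF : F 0 = 0) (f : α → β) (g : α → γ) (b : β) :
    F (extend f g 0 b) = extend f (F ∘ g) 0 b := by
  rw [apply_extend F]
  congr
  exact funext fun _ => hF

theorem extend_comp_eq_self_of_eq_zero {f : α → β} {g : β → γ}
    (hg : ∀ b ∉ Set.range f, g b = 0) : extend f (g ∘ f) 0 = g := by
  funext b
  by_cases hb : b ∈ Set.range f
  · obtain ⟨a, rfl⟩ := hb
    exact FactorsThrough.extend_apply (fun _ _ h => congrArg g h) 0 a
  · rw [extend_apply' _ _ _ hb, hg b hb, Pi.zero_apply]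

end Function

theorem tsum_star_extend_zero_mul {α β R : Type*} [NonUnitalNonAssocSemiring R] [StarAddMonoid R]
    [TopologicalSpace R] {ι : α → β} (hι : Injective ι) (x : α → R) (y : β → R) :
    ∑' n, star (extend ι x 0 n) * y n = ∑' k, star (x k) * y (ι k) := by
  refine (hι.tsum_eq fun n hn => ?_).symm.trans (tsum_congr fun k => by rw [hι.extend_apply])
  by_contra h
  exact hn (by simp [extend_apply' _ _ _ h])

theorem norm_sum_mul_le_sum_mul_sum {ι R : Type*} [SeminormedRing R] (s : Finset ι) (f g : ι → R) :
    ‖∑ i ∈ s, f i * g i‖ ≤ (∑ i ∈ s, ‖f i‖) * ∑ i ∈ s, ‖g i‖ := by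
  rw [Finset.sum_mul]
  refine (norm_sum_le _ _).trans (Finset.sum_le_sum fun i hi => ?_)
  exact (norm_mul_le _ _).trans <| mul_le_mul_of_nonneg_left
    (Finset.single_le_sum (fun j _ => norm_nonneg (g j)) hi) (norm_nonneg _)

theorem Set.Infinite.exists_injective_forall_le {α : Type*} {T : Set α} (hT : T.Infinite)
    {f : α → ℝ} (hf : Tendsto f cofinite (𝓝 0)) {ε : ℕ → ℝ} (hε : ∀ j, 0 < ε j) :
    ∃ s : ℕ → α, Injective s ∧ (∀ j, s j ∈ T) ∧ ∀ j, f (s j) ≤ ε j := by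
  set e := hT.natEmbedding
  have he : Injective fun k => (e k : α) := Subtype.val_injective.comp e.injective
  have hfe : Tendsto (fun k => f (e k)) atTop (𝓝 0) := by
    rw [← Nat.cofinite_eq_atTop]
    exact hf.comp he.tendsto_cofinite
  obtain ⟨φ, hφ, hle⟩ := extraction_forall_of_eventually fun j => hfe.eventually_le_const (hε j)
  exact ⟨fun j => e (φ j), he.comp hφ.injective, fun j => (e (φ j)).2, hle⟩

theorem Memℓp.tendsto_norm_cofinite_zero {α : Type*} {E : α → Type*}
    [∀ i, NormedAddCommGroup (E i)] {p : ℝ≥0∞} (hp : 0 < p.toReal) {f : ∀ i, E i}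
    (hf : Memℓp f p) :
    Tendsto (fun i => ‖f i‖) cofinite (𝓝 0) := by
  have hroot : ContinuousAt (fun t : ℝ => t ^ p.toReal⁻¹) 0 :=
    Real.continuousAt_rpow_const _ _ (Or.inr (inv_pos.2 hp).le)
  have := hroot.tendsto.comp (hf.summable hp).tendsto_cofinite_zero
  simpa [comp_def, ← Real.rpow_mul (norm_nonneg _), mul_inv_cancel₀ hp.ne',
    Real.zero_rpow (inv_pos.2 hp).ne'] using this

section Memℓp

variable {α β E : Type*} [NormedAddCommGroup E] {p : ℝ≥0∞}

theorem Memℓp.extend_zero (hp : 0 < p.toReal) {ι : α → β} (hι : Injective ι) {x : α → E}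
    (hx : Memℓp x p) : Memℓp (extend ι x 0) p := by
  rw [memℓp_gen_iff hp] at hx ⊢
  have hnorm : (fun b => ‖extend ι x 0 b‖ ^ p.toReal) = extend ι (fun a => ‖x a‖ ^ p.toReal) 0 :=
    funext <| apply_extend_zero (fun v : E => ‖v‖ ^ p.toReal) (by simp [hp.ne']) ι x
  rw [hnorm]
  exact (summable_extend_zero hι).2 hx

theorem Memℓp.comp_injective (hp : 0 < p.toReal) {ι : α → β} (hι : Injective ι) {y : β → E}
    (hy : Memℓp y p) : Memℓp (y ∘ ι) p :=
  (memℓp_gen_iff hp).2 ((hy.summable hp).comp_injective hι)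

theorem memℓp_pow_smul {𝕜 : Type*} [NormedField 𝕜] [NormedSpace 𝕜 E] (hp : 0 < p.toReal)
    {c : 𝕜} (hc : ‖c‖ < 1) (v : E) :
    Memℓp (fun j : ℕ => c ^ j • v) p := by
  refine (memℓp_gen_iff hp).2 ?_
  have hgeom := (summable_geometric_of_lt_one (by positivity)
    (Real.rpow_lt_one (norm_nonneg c) hc hp)).mul_right (‖v‖ ^ p.toReal)
  refine hgeom.congr fun j => ?_
  rw [norm_smul, norm_pow, Real.mul_rpow (by positivity) (norm_nonneg v),
    Real.rpow_pow_comm (norm_nonneg c)]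

end Memℓp

namespace lp

section VanishingOn

variable {α 𝕜 : Type*} (E : α → Type*) [∀ i, NormedAddCommGroup (E i)] (p : ℝ≥0∞) [NormedRing 𝕜]
  [∀ i, Module 𝕜 (E i)] [∀ i, IsBoundedSMul 𝕜 (E i)]

variable (𝕜) in
def vanishingOn (S : Set α) : Submodule 𝕜 (lp E p) where
  carrier := {y | ∀ n ∈ S, y n = 0}
  add_mem' hx hy n hn := by simp [hx n hn, hy n hn]
  zero_mem' _ _ := rfl
  smul_mem' c x hx n hn := by simp [hx n hn]

theorem isClosed_vanishingOn [Fact (1 ≤ p)] (S : Set α) :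
    IsClosed (vanishingOn 𝕜 E p S : Set (lp E p)) := by
  rw [show (vanishingOn 𝕜 E p S : Set (lp E p)) = ⋂ n ∈ S, {y | y n = 0} by ext; simp; rfl]
  exact isClosed_biInter fun n _ => isClosed_eq (lipschitzWith_one_eval (E := E) p n).continuous
    continuous_const

theorem isCompl_vanishingOn_compl (S : Set α) :
    IsCompl (vanishingOn 𝕜 E p Sᶜ) (vanishingOn 𝕜 E p S) := by
  classical
  constructor
  · rw [Submodule.disjoint_def]
    intro y hSc hS
    ext n
    by_cases hn : n ∈ S
    exacts [hS n hn, hSc n hn]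
  · rw [codisjoint_iff, eq_top_iff]
    intro y _
    let yS : lp E p := ⟨fun n => if n ∈ S then y n else 0,
      (lp.memℓp y).mono' fun n => by split_ifs <;> simp⟩
    refine Submodule.mem_sup.2 ⟨yS, fun n hn => if_neg hn, y - yS, fun n hn => ?_, by abel⟩
    show y n - (if n ∈ S then y n else 0) = 0
    rw [if_pos hn, sub_self]

end VanishingOn

variable {α β 𝕜 E : Type*} [NormedAddCommGroup E] {p : ℝ≥0∞} [Fact (1 ≤ p)] [NormedRing 𝕜]
  [Module 𝕜 E] [IsBoundedSMul 𝕜 E] {ι : α → β}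

variable (𝕜 E) in
noncomputable def extendZero (hp : 0 < p.toReal) (hι : Injective ι) :
    lp (fun _ : α => E) p →ₗᵢ[𝕜] lp (fun _ : β => E) p where
  toFun x := ⟨extend ι x 0, (lp.memℓp x).extend_zero hp hι⟩
  map_add' x y := by
    ext1
    have h := extend_add ι (⇑x) (⇑y) (0 : β → E) 0
    rw [add_zero] at h
    exact h
  map_smul' c x := by
    ext1
    simpa using extend_smul c ι (⇑x) 0
  norm_map' x := by
    rw [← Real.rpow_left_inj (norm_nonneg _) (norm_nonneg _) hp.ne', norm_rpow_eq_tsum hp,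
      norm_rpow_eq_tsum hp]
    show ∑' b, ‖extend ι x 0 b‖ ^ p.toReal = _
    simp_rw [apply_extend_zero (fun v : E => ‖v‖ ^ p.toReal) (by simp [hp.ne']) ι x]
    exact tsum_extend_zero hι _

variable (𝕜 E) in
noncomputable def compInjective (hp : 0 < p.toReal) (hι : Injective ι) :
    lp (fun _ : β => E) p →L[𝕜] lp (fun _ : α => E) p :=
  LinearMap.mkContinuous
    { toFun y := ⟨y ∘ ι, (lp.memℓp y).comp_injective hp hι⟩
      map_add' _ _ := rfl
      map_smul' _ _ := rfl }
    1 fun y => by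
      rw [one_mul]
      refine norm_le_of_tsum_le hp (norm_nonneg y) ?_
      rw [norm_rpow_eq_tsum hp]
      exact tsum_comp_le_tsum_of_inj ((lp.memℓp y).summable hp) (fun _ => by positivity) hι

theorem range_extendZero (hp : 0 < p.toReal) (hι : Injective ι) :
    LinearMap.range (extendZero 𝕜 E hp hι).toLinearMap = vanishingOn 𝕜 _ p (Set.range ι)ᶜ := by
  ext y
  refine ⟨?_, fun hy => ⟨compInjective 𝕜 E hp hι y, ?_⟩⟩
  · rintro ⟨x, rfl⟩ n hn
    exact extend_apply' _ _ _ hn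
  · ext1
    exact extend_comp_eq_self_of_eq_zero hy

end lp

theorem lp.not_exists_fin_spanning_vanishingOn {α 𝕜 A : Type*} [NontriviallyNormedField 𝕜]
    [NormedRing A] [NormOneClass A] [NormedAlgebra 𝕜 A] {p : ℝ≥0∞} (hp : 0 < p.toReal)
    {S : Set α} (hS : Sᶜ.Infinite) :
    ¬ ∃ (m : ℕ) (g : Fin m → lp (fun _ : α => A) p), ∀ y : lp (fun _ : α => A) p,
      (∀ n ∈ S, y n = 0) → ∃ a : Fin m → A, ∀ n, y n = ∑ i, g i n * a i := by
  rintro ⟨m, g, hg⟩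
  obtain ⟨c, hc0, hc1⟩ := NormedField.exists_norm_lt_one 𝕜
  set q := ‖c‖
  let r : α → ℝ := fun n => ∑ i, ‖g i n‖
  have hr : Tendsto r cofinite (𝓝 0) := by
    simpa using tendsto_finsetSum Finset.univ fun i _ =>
      (lp.memℓp (g i)).tendsto_norm_cofinite_zero hp
  obtain ⟨s, hs, hsS, hrs⟩ :=
    hS.exists_injective_forall_le hr (ε := fun j => (q ^ j) ^ 2) fun j => by positivity
  let y : lp (fun _ : α => A) p :=
    ⟨extend s (fun j => c ^ j • (1 : A)) 0, (memℓp_pow_smul hp hc1 1).extend_zero hp hs⟩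
  have hy : ∀ n ∈ S, y n = 0 := fun n hn =>
    extend_apply' (f := s) (fun j => c ^ j • (1 : A)) 0 n <| by
      rintro ⟨j, rfl⟩
      exact hsS j hn
  obtain ⟨a, ha⟩ := hg y hy
  set M := ∑ i, ‖a i‖
  have hM : ∀ j, 1 ≤ M * q ^ j := fun j => by
    have hle : q ^ j ≤ (q ^ j) ^ 2 * M := calc
      q ^ j = ‖y (s j)‖ := by simp [y, q, hs.extend_apply, norm_smul]
      _ ≤ r (s j) * M := by rw [ha]; exact norm_sum_mul_le_sum_mul_sum _ _ _
      _ ≤ (q ^ j) ^ 2 * M := by gcongr; exact hrs j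
    have hqj : 0 < q ^ j := by positivity
    nlinarith
  have hlim : Tendsto (fun j => M * q ^ j) atTop (𝓝 0) := by
    simpa using (tendsto_pow_atTop_nhds_zero_of_lt_one hc0.le hc1).const_mul M
  obtain ⟨j, hj⟩ := (hlim.eventually (gt_mem_nhds one_pos)).exists
  exact (hM j).not_gt hj

theorem shift_like_upper_not_fredholm_general
    {A : Type*} [NormedRing A] [StarRing A]
    [NormOneClass A] [NormedAlgebra ℂ A]
    (ι : ℕ → ℕ) (hinj : Function.Injective ι)
    (hcof : (Set.range ι)ᶜ.Infinite) :
    ∃ F : lp (fun _ : ℕ => A) 2 →L[ℂ] lp (fun _ : ℕ => A) 2,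
      -- defining formula: `F` reindexes along `ι`
      (∀ x k, F x (ι k) = x k) ∧
      (∀ x n, n ∉ Set.range ι → F x n = 0) ∧
      -- `F` is an isometry
      (∀ x, ‖F x‖ = ‖x‖) ∧
      -- `A`-linearity: `F` commutes with the right `A`-module action
      (∀ (x y : lp (fun _ : ℕ => A) 2) (a : A),
        (∀ n, y n = x n * a) → ∀ n, F y n = F x n * a) ∧
      -- adjointability with respect to the `A`-valued inner product `⟨x,y⟩ = Σ (xₙ)* yₙ`
      (∃ G : lp (fun _ : ℕ => A) 2 →L[ℂ] lp (fun _ : ℕ => A) 2,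
        ∀ x y, ∑' n, star (F x n) * y n = ∑' n, star (x n) * G y n) ∧
      -- the range of `F` is the closed submodule generated by `{e_{ι(k)}}`
      (LinearMap.range (F : lp (fun _ : ℕ => A) 2 →ₗ[ℂ] lp (fun _ : ℕ => A) 2) : Set (lp (fun _ : ℕ => A) 2)) =
        {y | ∀ n, n ∉ Set.range ι → y n = 0} ∧
      IsClosed (Set.range F) ∧
      -- the range is complementable, with non-finitely-generated complement; in particular
      -- `F` is upper semi-`A`-Fredholm but not `A`-Fredholm
      (∃ N : Submodule ℂ (lp (fun _ : ℕ => A) 2),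
        (N : Set (lp (fun _ : ℕ => A) 2)) = {y | ∀ n, n ∈ Set.range ι → y n = 0} ∧
        IsCompl (LinearMap.range (F : lp (fun _ : ℕ => A) 2 →ₗ[ℂ] lp (fun _ : ℕ => A) 2)) N ∧
        ¬ ∃ (m : ℕ) (g : Fin m → lp (fun _ : ℕ => A) 2),
            (∀ i, g i ∈ N) ∧
            ∀ y ∈ N, ∃ a : Fin m → A, ∀ n, y n = ∑ i, g i n * a i) := by
  have hp : 0 < (2 : ℝ≥0∞).toReal := by norm_num
  set Fi := lp.extendZero ℂ A hp hinj
  have hrange : LinearMap.range Fi.toLinearMap = lp.vanishingOn ℂ _ 2 (Set.range ι)ᶜ :=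
    lp.range_extendZero hp hinj
  refine ⟨Fi.toContinuousLinearMap, fun x k => hinj.extend_apply _ _ k,
    fun x n hn => extend_apply' _ _ n hn, Fi.norm_map, ?_,
    ⟨lp.compInjective ℂ A hp hinj, fun x y => tsum_star_extend_zero_mul hinj x y⟩,
    congrArg SetLike.coe hrange, ?_, lp.vanishingOn ℂ _ 2 (Set.range ι), rfl,
    hrange ▸ lp.isCompl_vanishingOn_compl _ _ _, ?_⟩
  · intro x y a hxy n
    change extend ι y 0 n = extend ι x 0 n * a
    rw [show ⇑y = fun k => x k * a from funext hxy]
    exact (apply_extend_zero (· * a) (zero_mul a) ι x n).symm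
  · change IsClosed (Set.range Fi.toLinearMap)
    rw [← LinearMap.coe_range, hrange]
    exact lp.isClosed_vanishingOn _ _ _
  · rintro ⟨m, g, -, hg⟩
    exact lp.not_exists_fin_spanning_vanishingOn (𝕜 := ℂ) hp hcof ⟨m, g, hg⟩

/-- Let `ι : ℕ → ℕ` be an injective monotone map with infinite complement,
and let `F` on `H_A = ℓ²(A)` (over a unital C*-algebra `A`) be given by `F(e_k) = e_{ι(k)}`.
Then `F` is an adjointable `A`-linear isometry, its range is the closed submodule of sequences
supported on `ι(ℕ)`, this range is complementable with non-finitely-generated complement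
(the sequences supported off `ι(ℕ)`); hence `F` is upper semi-`A`-Fredholm but not
`A`-Fredholm. -/
theorem shift_like_upper_not_fredholm
    {A : Type*} [NormedRing A] [StarRing A] [CStarRing A] [CompleteSpace A]
    [NormOneClass A] [NormedAlgebra ℂ A] [StarModule ℂ A]
    (ι : ℕ → ℕ) (hinj : Function.Injective ι) (hmono : Monotone ι)
    (hcof : (Set.range ι)ᶜ.Infinite) :
    ∃ F : lp (fun _ : ℕ => A) 2 →L[ℂ] lp (fun _ : ℕ => A) 2,
      -- defining formula: `F` reindexes along `ι`
      (∀ x k, F x (ι k) = x k) ∧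
      (∀ x n, n ∉ Set.range ι → F x n = 0) ∧
      -- `F` is an isometry
      (∀ x, ‖F x‖ = ‖x‖) ∧
      -- `A`-linearity: `F` commutes with the right `A`-module action
      (∀ (x y : lp (fun _ : ℕ => A) 2) (a : A),
        (∀ n, y n = x n * a) → ∀ n, F y n = F x n * a) ∧
      -- adjointability with respect to the `A`-valued inner product `⟨x,y⟩ = Σ (xₙ)* yₙ`
      (∃ G : lp (fun _ : ℕ => A) 2 →L[ℂ] lp (fun _ : ℕ => A) 2,
        ∀ x y, ∑' n, star (F x n) * y n = ∑' n, star (x n) * G y n) ∧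
      -- the range of `F` is the closed submodule generated by `{e_{ι(k)}}`
      (LinearMap.range (F : lp (fun _ : ℕ => A) 2 →ₗ[ℂ] lp (fun _ : ℕ => A) 2) : Set (lp (fun _ : ℕ => A) 2)) =
        {y | ∀ n, n ∉ Set.range ι → y n = 0} ∧
      IsClosed (Set.range F) ∧
      -- the range is complementable, with non-finitely-generated complement; in particular
      -- `F` is upper semi-`A`-Fredholm but not `A`-Fredholm
      (∃ N : Submodule ℂ (lp (fun _ : ℕ => A) 2),
        (N : Set (lp (fun _ : ℕ => A) 2)) = {y | ∀ n, n ∈ Set.range ι → y n = 0} ∧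
        IsCompl (LinearMap.range (F : lp (fun _ : ℕ => A) 2 →ₗ[ℂ] lp (fun _ : ℕ => A) 2)) N ∧
        ¬ ∃ (m : ℕ) (g : Fin m → lp (fun _ : ℕ => A) 2),
            (∀ i, g i ∈ N) ∧
            ∀ y ∈ N, ∃ a : Fin m → A, ∀ n, y n = ∑ i, g i n * a i) :=
  shift_like_upper_not_fredholm_general ι hinj hcof
end
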